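/- arXiv:0704.3113 — 5 statements merged into one kernel-verified Lean document; each statement's English description precedes it below -/
import Mathlib

section
/- A polar graph F(θ) = r(θ)(cos θ, sin θ) with r > 0 satisfies the self-similar equation κ = F·ν (with ν = σ^{-1}(−rR + r'N)) if and only if r satisfies the ODE r r'' = r² + 2(r')² + r²(r² + (r')²). -/
lemma inv_pow_three_mul_eq_neg_div_iff {s x y : ℝ} (hs : s ≠ 0) :
    (s ^ 3)⁻¹ * x = -y / s ↔ x = -(y * s ^ 2) := by
  rw [inv_mul_eq_iff_eq_mul₀ (pow_ne_zero 3 hs)]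
  constructor <;> intro h
  · rw [h]; field_simp
  · rw [h]; field_simp

/-- Where `a = b = 0` both sides hold, the left one only through `0⁻¹ = 0` and `x / 0 = 0`. -/
lemma polar_curvature_eq_iff (a b c : ℝ) :
    ((√(a ^ 2 + b ^ 2)) ^ 3)⁻¹ * (2 * b ^ 2 - a * c + a ^ 2) = -a ^ 2 / √(a ^ 2 + b ^ 2)
      ↔ a * c = a ^ 2 + 2 * b ^ 2 + a ^ 2 * (a ^ 2 + b ^ 2) := by
  rcases (add_nonneg (sq_nonneg a) (sq_nonneg b)).eq_or_lt with hq | hq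
  · obtain ⟨rfl, rfl⟩ : a = 0 ∧ b = 0 := by
      constructor <;> nlinarith [sq_nonneg a, sq_nonneg b]
    simp
  · rw [inv_pow_three_mul_eq_neg_div_iff (Real.sqrt_pos.mpr hq).ne', Real.sq_sqrt hq.le]
    constructor <;> intro h <;> linarith

theorem stmt4_general (r : ℝ → ℝ)
    (σ : ℝ → ℝ) (hσ : σ = fun θ => Real.sqrt ((r θ)^2 + (deriv r θ)^2)) :
    (∀ θ : ℝ, ((σ θ)^3)⁻¹ * (2 * (deriv r θ)^2 - r θ * deriv (deriv r) θ + (r θ)^2)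
        = -(r θ)^2 / σ θ)
      ↔ (∀ θ : ℝ, r θ * deriv (deriv r) θ
        = (r θ)^2 + 2 * (deriv r θ)^2 + (r θ)^2 * ((r θ)^2 + (deriv r θ)^2)) := by
  subst hσ
  exact forall_congr' fun θ => polar_curvature_eq_iff _ _ _

/-- A polar graph `F(θ) = r(θ)(cos θ, sin θ)` with `r > 0` satisfies the self-similar
equation `κ = F·ν`, i.e. `σ⁻³(2 r'² - r r'' + r²) = -r²/σ` with `σ = √(r² + r'²)`,
if and only if `r` satisfies the ODE `r r'' = r² + 2 r'² + r² (r² + r'²)`. -/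
theorem stmt4 (r : ℝ → ℝ) (hr : ContDiff ℝ 2 r) (hpos : ∀ θ : ℝ, 0 < r θ)
    (σ : ℝ → ℝ) (hσ : σ = fun θ => Real.sqrt ((r θ)^2 + (deriv r θ)^2)) :
    (∀ θ : ℝ, ((σ θ)^3)⁻¹ * (2 * (deriv r θ)^2 - r θ * deriv (deriv r) θ + (r θ)^2)
        = -(r θ)^2 / σ θ)
      ↔ (∀ θ : ℝ, r θ * deriv (deriv r) θ
        = (r θ)^2 + 2 * (deriv r θ)^2 + (r θ)^2 * ((r θ)^2 + (deriv r θ)^2)) :=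
  stmt4_general r σ hσ
end

section
/- If v: (a,b) → ℝ is differentiable and satisfies v'(θ) ≥ 1 + v(θ)² for all θ ∈ (a,b), then b − a ≤ π. -/
/-- Riccati comparison: if `v` is differentiable on `(a,b)` with
`v' ≥ 1 + v²` there, then `b - a ≤ π`. -/
theorem stmt7 (a b : ℝ) (v v' : ℝ → ℝ)
    (hv : ∀ θ ∈ Set.Ioo a b, HasDerivAt v (v' θ) θ)
    (h : ∀ θ ∈ Set.Ioo a b, 1 + (v θ)^2 ≤ v' θ) :
    b - a ≤ Real.pi := by
  by_contra hab
  push_neg at hab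
  set f : ℝ → ℝ := fun θ => Real.arctan (v θ) - θ with hf
  have key : ∀ θ ∈ Set.Ioo a b, HasDerivAt f (1 / (1 + v θ ^ 2) * v' θ - 1) θ := by
    intro θ hθ
    exact ((Real.hasDerivAt_arctan (v θ)).comp θ (hv θ hθ)).sub (hasDerivAt_id θ)
  have hpos : ∀ θ : ℝ, (0:ℝ) < 1 + v θ ^ 2 := fun θ => by positivity
  have hmono : MonotoneOn f (Set.Ioo a b) := by
    apply monotoneOn_of_hasDerivWithinAt_nonneg (convex_Ioo a b)
    · intro θ hθ; exact (key θ hθ).continuousAt.continuousWithinAt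
    · intro θ hθ
      rw [interior_Ioo] at hθ
      exact (key θ hθ).hasDerivWithinAt
    · intro θ hθ
      rw [interior_Ioo] at hθ
      have := h θ hθ
      have h1 : (1:ℝ) ≤ 1 / (1 + v θ ^ 2) * v' θ := by
        rw [one_div, inv_mul_eq_div, le_div_iff₀ (hpos θ), one_mul]
        linarith
      linarith
  set ε := (b - a - Real.pi) / 4 with hε
  have hεpos : 0 < ε := by
    have := Real.pi_pos; simp only [hε]; linarith
  have hπ := Real.pi_pos
  have h1 : a + ε ∈ Set.Ioo a b := ⟨by linarith, by linarith⟩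
  have h2 : b - ε ∈ Set.Ioo a b := ⟨by linarith, by linarith⟩
  have hle : f (a + ε) ≤ f (b - ε) := hmono h1 h2 (by linarith)
  have b1 := Real.arctan_lt_pi_div_two (v (b - ε))
  have b2 := Real.neg_pi_div_two_lt_arctan (v (a + ε))
  simp only [hf] at hle
  linarith
end

section
/- Any maximal positive solution r of the ODE r r'' = r² + 2(r')² + r²(r² + (r')²) is defined on an interval (a,b) of length strictly less than π. -/
/-! For a solution `r > 0`, the logarithmic derivative `v = r'/r` satisfies
`v' = (1 + v²)(1 + r²)`, so `arctan v - θ` has derivative `r² > 0` and is strictly increasing.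
Hence `d - c < arctan (v d) - arctan (v c) < π` for `a < c < d < b`; the increase of
`arctan v - θ` across a fixed middle subinterval is a uniform gap, which keeps `b - a`
strictly below `π`. -/

/-- `r` (with derivatives `r'`, `r''`) is a positive solution of the ODE
`r r'' = r² + 2 r'² + r² (r² + r'²)` on the open interval `(a,b)`. -/
def SolOn (r r' r'' : ℝ → ℝ) (a b : ℝ) : Prop :=
  ∀ θ ∈ Set.Ioo a b, 0 < r θ ∧ HasDerivAt r (r' θ) θ ∧ HasDerivAt r' (r'' θ) θ ∧
    r θ * r'' θ = (r θ)^2 + 2 * (r' θ)^2 + (r θ)^2 * ((r θ)^2 + (r' θ)^2)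

/-- The solution on `(a,b)` is maximal: it admits no extension to a strictly
larger open interval. -/
def MaximalSolOn (r r' r'' : ℝ → ℝ) (a b : ℝ) : Prop :=
  SolOn r r' r'' a b ∧
    ∀ (a' b' : ℝ) (ρ ρ' ρ'' : ℝ → ℝ), a' ≤ a → b ≤ b' →
      (∀ θ ∈ Set.Ioo a b, ρ θ = r θ) → SolOn ρ ρ' ρ'' a' b' → a' = a ∧ b' = b

open Real Set

theorem sub_lt_of_strictMonoOn_sub_id {a b L : ℝ} {g : ℝ → ℝ} (hab : a < b)
    (hmono : StrictMonoOn (fun x => g x - x) (Ioo a b))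
    (hosc : ∀ x ∈ Ioo a b, ∀ y ∈ Ioo a b, g y - g x ≤ L) : b - a < L := by
  set c₀ := a + (b - a) / 3 with hc₀_def
  set d₀ := a + 2 * (b - a) / 3 with hd₀_def
  have hc₀ : c₀ ∈ Ioo a b := ⟨by linarith, by linarith⟩
  have hd₀ : d₀ ∈ Ioo a b := ⟨by linarith, by linarith⟩
  set δ := (g d₀ - d₀) - (g c₀ - c₀) with hδ_def
  have hδ : 0 < δ := sub_pos.2 (hmono hc₀ hd₀ (by linarith))
  have hgap : ∀ c d, a < c → c < c₀ → d₀ < d → d < b → d - c ≤ L - δ := by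
    intro c d hac hcc₀ hd₀d hdb
    have hc : c ∈ Ioo a b := ⟨hac, by linarith⟩
    have hd : d ∈ Ioo a b := ⟨by linarith, hdb⟩
    have h₁ := hmono hc hc₀ hcc₀
    have h₂ := hmono hd₀ hd hd₀d
    linarith [hosc c hc d hd]
  suffices b - a ≤ L - δ by linarith
  refine le_of_forall_pos_le_add fun ε hε => ?_
  set m := min (ε / 2) ((b - a) / 6)
  have hm : 0 < m := lt_min (by linarith) (by linarith)
  have hmε : m ≤ ε / 2 := min_le_left _ _
  have hm6 : m ≤ (b - a) / 6 := min_le_right _ _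
  linarith [hgap (a + m) (b - m) (by linarith) (by linarith) (by linarith) (by linarith)]

theorem arctan_sub_arctan_lt_pi (x y : ℝ) : arctan y - arctan x < π := by
  linarith [arctan_lt_pi_div_two y, neg_pi_div_two_lt_arctan x]

theorem hasDerivAt_arctan_div {r r' : ℝ → ℝ} {θ r'₀ r''₀ : ℝ} (hr : r θ ≠ 0)
    (hr' : HasDerivAt r r'₀ θ) (hr'' : HasDerivAt r' r''₀ θ) :
    HasDerivAt (fun t => arctan (r' t / r t))
      ((r θ * r''₀ - r' θ * r'₀) / (r θ ^ 2 + r' θ ^ 2)) θ := by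
  refine (hr''.div hr' hr).arctan.congr_deriv ?_
  simp only [Pi.div_apply]
  field_simp

namespace SolOn

variable {r r' r'' : ℝ → ℝ} {a b : ℝ}

/-- The ODE says exactly that `r r'' - r'² = (r² + r'²)(1 + r²)`, i.e. `(arctan (r'/r))' = 1 + r²`. -/
theorem hasDerivAt_arctan_div_sub_id (hsol : SolOn r r' r'' a b) {θ : ℝ} (hθ : θ ∈ Ioo a b) :
    HasDerivAt (fun t => arctan (r' t / r t) - t) (r θ ^ 2) θ := by
  obtain ⟨hr, hr', hr'', hode⟩ := hsol θ hθ
  refine ((hasDerivAt_arctan_div hr.ne' hr' hr'').sub (hasDerivAt_id θ)).congr_deriv ?_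
  have : 0 < r θ ^ 2 + r' θ ^ 2 := by positivity
  field_simp
  linear_combination hode

theorem strictMonoOn_arctan_div_sub_id (hsol : SolOn r r' r'' a b) :
    StrictMonoOn (fun t => arctan (r' t / r t) - t) (Ioo a b) := by
  refine strictMonoOn_of_hasDerivWithinAt_pos (f' := fun θ => r θ ^ 2) (convex_Ioo a b)
    (fun θ hθ => (hsol.hasDerivAt_arctan_div_sub_id hθ).continuousAt.continuousWithinAt)
    (fun θ hθ => ?_) (fun θ hθ => ?_) <;> rw [interior_Ioo] at hθ
  · exact (hsol.hasDerivAt_arctan_div_sub_id hθ).hasDerivWithinAt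
  · exact pow_pos (hsol θ hθ).1 2

theorem sub_lt_pi (hsol : SolOn r r' r'' a b) (hab : a < b) : b - a < π :=
  sub_lt_of_strictMonoOn_sub_id hab hsol.strictMonoOn_arctan_div_sub_id
    fun _ _ _ _ => (arctan_sub_arctan_lt_pi _ _).le

end SolOn

/-- Any maximal positive solution of `r r'' = r² + 2 r'² + r² (r² + r'²)` is defined on
an interval of length strictly less than `π`. -/
theorem stmt8 (a b : ℝ) (hab : a < b) (r r' r'' : ℝ → ℝ)
    (hmax : MaximalSolOn r r' r'' a b) :
    b - a < Real.pi :=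
  hmax.1.sub_lt_pi hab
end

section
/- If r is a maximal positive solution of r r'' = r² + 2(r')² + r²(r² + (r')²) on (a,b) attaining its minimum value r₀ = r(θ₀), then b − a < π/(1 + r₀²). -/
open Set Filter Topology Real

theorem Convex.strictMonoOn_of_hasDerivAt_pos {D : Set ℝ} (hD : Convex ℝ D) {f f' : ℝ → ℝ}
    (hf : ∀ x ∈ D, HasDerivAt f (f' x) x) (hf' : ∀ x ∈ interior D, 0 < f' x) :
    StrictMonoOn f D :=
  strictMonoOn_of_hasDerivWithinAt_pos hD
    (fun x hx => (hf x hx).continuousAt.continuousWithinAt)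
    (fun x hx => (hf x (interior_subset hx)).hasDerivWithinAt) hf'

theorem strictMonoOn_Ioo_of_hasDerivAt_pos_of_ne {f f' : ℝ → ℝ} {a b c : ℝ} (hc : c ∈ Ioo a b)
    (hf : ∀ x ∈ Ioo a b, HasDerivAt f (f' x) x) (hf' : ∀ x ∈ Ioo a b, x ≠ c → 0 < f' x) :
    StrictMonoOn f (Ioo a b) := by
  rw [← Ioc_union_Ico_eq_Ioo hc.1 hc.2]
  refine StrictMonoOn.union ?_ ?_ (isGreatest_Ioc hc.1) (isLeast_Ico hc.2)
  · refine (convex_Ioc a c).strictMonoOn_of_hasDerivAt_pos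
      (fun x hx => hf x ⟨hx.1, hx.2.trans_lt hc.2⟩) fun x hx => ?_
    rw [interior_Ioc] at hx
    exact hf' x ⟨hx.1, hx.2.trans hc.2⟩ hx.2.ne
  · refine (convex_Ico c b).strictMonoOn_of_hasDerivAt_pos
      (fun x hx => hf x ⟨hc.1.trans_le hx.1, hx.2⟩) fun x hx => ?_
    rw [interior_Ico] at hx
    exact hf' x ⟨hc.1.trans hx.1, hx.2⟩ hx.1.ne'

theorem sub_le_of_forall_Ioo_sub_le {a b s₀ t₀ L : ℝ} (hs₀ : a < s₀) (ht₀ : t₀ < b)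
    (h : ∀ s ∈ Ioo a s₀, ∀ t ∈ Ioo t₀ b, t - s ≤ L) : b - a ≤ L := by
  have hlim : Tendsto (fun p : ℝ × ℝ => p.2 - p.1) (𝓝[>] a ×ˢ 𝓝[<] b) (𝓝 (b - a)) := by
    refine ((continuous_snd.sub continuous_fst).tendsto (a, b)).mono_left ?_
    rw [nhds_prod_eq]
    exact prod_mono nhdsWithin_le_nhds nhdsWithin_le_nhds
  refine le_of_tendsto hlim ?_
  filter_upwards [prod_mem_prod (Ioo_mem_nhdsGT hs₀) (Ioo_mem_nhdsLT ht₀)] with p hp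
  exact h p.1 hp.1 p.2 hp.2

namespace SolOn

variable {r r' r'' : ℝ → ℝ} {a b : ℝ}

theorem hasDerivAt_arctan (h : SolOn r r' r'' a b) {θ : ℝ} (hθ : θ ∈ Ioo a b) :
    HasDerivAt (fun t => arctan (r' t / r t)) (1 + r θ ^ 2) θ := by
  obtain ⟨hr, hd, hd', hode⟩ := h θ hθ
  have hv : HasDerivAt (fun t => r' t / r t) ((r'' θ * r θ - r' θ * r' θ) / r θ ^ 2) θ :=
    hd'.div hd hr.ne'
  convert hv.arctan using 1
  field_simp
  linear_combination -hode

theorem strictMonoOn_arctan (h : SolOn r r' r'' a b) :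
    StrictMonoOn (fun t => arctan (r' t / r t)) (Ioo a b) :=
  (convex_Ioo a b).strictMonoOn_of_hasDerivAt_pos (fun _ hθ => h.hasDerivAt_arctan hθ)
    fun _ _ => by positivity

theorem arctan_eq_zero_of_isMinOn (h : SolOn r r' r'' a b) {θ : ℝ} (hθ : θ ∈ Ioo a b)
    (hmin : IsMinOn r (Ioo a b) θ) : arctan (r' θ / r θ) = 0 := by
  rw [(hmin.isLocalMin (isOpen_Ioo.mem_nhds hθ)).hasDerivAt_eq_zero (h θ hθ).2.1, zero_div,
    arctan_zero]

theorem eq_of_isMinOn (h : SolOn r r' r'' a b) {θ₀ θ : ℝ} (hθ₀ : θ₀ ∈ Ioo a b)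
    (hθ : θ ∈ Ioo a b) (hmin₀ : IsMinOn r (Ioo a b) θ₀) (hmin : IsMinOn r (Ioo a b) θ) :
    θ₀ = θ :=
  h.strictMonoOn_arctan.injOn hθ₀ hθ <| by
    simp only [h.arctan_eq_zero_of_isMinOn hθ₀ hmin₀, h.arctan_eq_zero_of_isMinOn hθ hmin]

theorem lt_of_isMinOn (h : SolOn r r' r'' a b) {θ₀ θ : ℝ} (hθ₀ : θ₀ ∈ Ioo a b)
    (hθ : θ ∈ Ioo a b) (hmin : IsMinOn r (Ioo a b) θ₀) (hne : θ ≠ θ₀) : r θ₀ < r θ := by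
  refine (hmin hθ).lt_of_ne fun heq => hne (h.eq_of_isMinOn hθ₀ hθ hmin ?_).symm
  exact isMinOn_iff.2 fun x hx => heq ▸ hmin hx

theorem strictMonoOn_arctan_sub_mul (h : SolOn r r' r'' a b) {θ₀ : ℝ} (hθ₀ : θ₀ ∈ Ioo a b)
    (hmin : IsMinOn r (Ioo a b) θ₀) :
    StrictMonoOn (fun t => arctan (r' t / r t) - (1 + r θ₀ ^ 2) * t) (Ioo a b) := by
  refine strictMonoOn_Ioo_of_hasDerivAt_pos_of_ne hθ₀
    (fun θ hθ => (h.hasDerivAt_arctan hθ).sub ((hasDerivAt_id θ).const_mul _)) fun θ hθ hne => ?_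
  have hlt := h.lt_of_isMinOn hθ₀ hθ hmin hne
  have hpos := (h θ₀ hθ₀).1
  nlinarith

end SolOn

theorem stmt9_general (a b : ℝ) (r r' r'' : ℝ → ℝ)
    (hmax : MaximalSolOn r r' r'' a b)
    (θ₀ : ℝ) (hθ₀ : θ₀ ∈ Set.Ioo a b)
    (hmin : ∀ θ ∈ Set.Ioo a b, r θ₀ ≤ r θ) :
    b - a < Real.pi / (1 + (r θ₀)^2) := by
  set c := 1 + r θ₀ ^ 2
  set w := fun t => arctan (r' t / r t)
  have hg : StrictMonoOn (fun t => w t - c * t) (Ioo a b) :=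
    hmax.1.strictMonoOn_arctan_sub_mul hθ₀ (isMinOn_iff.2 hmin)
  obtain ⟨θ₁, hθ₀₁, hθ₁b⟩ := exists_between hθ₀.2
  have hθ₁ : θ₁ ∈ Ioo a b := ⟨hθ₀.1.trans hθ₀₁, hθ₁b⟩
  set δ := (w θ₁ - c * θ₁) - (w θ₀ - c * θ₀)
  have hδ : 0 < δ := sub_pos.2 (hg hθ₀ hθ₁ hθ₀₁)
  have hlen : b - a ≤ (π - δ) / c := by
    refine sub_le_of_forall_Ioo_sub_le hθ₀.1 hθ₁b fun s hs t ht => ?_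
    have hgs := hg.monotoneOn ⟨hs.1, hs.2.trans hθ₀.2⟩ hθ₀ hs.2.le
    have hgt := hg.monotoneOn hθ₁ ⟨hθ₁.1.trans ht.1, ht.2⟩ ht.1.le
    have hws : -(π / 2) < w s := neg_pi_div_two_lt_arctan _
    have hwt : w t < π / 2 := arctan_lt_pi_div_two _
    rw [le_div_iff₀ (by positivity)]
    linarith
  calc b - a ≤ (π - δ) / c := hlen
    _ < π / c := by gcongr; linarith

/-- If a maximal positive solution of `r r'' = r² + 2 r'² + r² (r² + r'²)` on `(a,b)`
attains its minimum `r₀ = r θ₀`, then `b - a < π / (1 + r₀²)`. -/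
theorem stmt9 (a b : ℝ) (hab : a < b) (r r' r'' : ℝ → ℝ)
    (hmax : MaximalSolOn r r' r'' a b)
    (θ₀ : ℝ) (hθ₀ : θ₀ ∈ Set.Ioo a b)
    (hmin : ∀ θ ∈ Set.Ioo a b, r θ₀ ≤ r θ) :
    b - a < Real.pi / (1 + (r θ₀)^2) :=
  stmt9_general a b r r' r'' hmax θ₀ hθ₀ hmin
end

section
/- If r is a maximal positive solution of r r'' = r² + 2(r')² + r²(r² + (r')²) on (a,b) with a critical point at θ₀ ∈ (a,b), then r is symmetric about θ₀: r(θ₀ + η) = r(θ₀ − η) for all admissible η, and consequently θ₀ = (a+b)/2. -/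
open Set Filter Topology

section Uniqueness

variable {E : Type*} [NormedAddCommGroup E] [NormedSpace ℝ E] {v : E → E} {y z : ℝ → E}

theorem eventuallyEq_of_hasDerivAt_of_contDiffAt {t₀ : ℝ} (hv : ContDiffAt ℝ 1 v (y t₀))
    (hy : ∀ᶠ t in 𝓝 t₀, HasDerivAt y (v (y t)) t) (hz : ∀ᶠ t in 𝓝 t₀, HasDerivAt z (v (z t)) t)
    (h : y t₀ = z t₀) : y =ᶠ[𝓝 t₀] z := by
  obtain ⟨K, u, hu, hlip⟩ := hv.exists_lipschitzOnWith
  have hyu : ∀ᶠ t in 𝓝 t₀, y t ∈ u := hy.self_of_nhds.continuousAt.eventually_mem hu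
  have hzu : ∀ᶠ t in 𝓝 t₀, z t ∈ u := hz.self_of_nhds.continuousAt.eventually_mem (h ▸ hu)
  exact ODE_solution_unique_of_eventually (v := fun _ => v) (s := fun _ => u)
    (.of_forall fun _ => hlip) (hy.and hyu) (hz.and hzu) h

theorem IsPreconnected.eqOn_of_hasDerivAt_of_contDiffAt {s : Set ℝ} (hs : IsPreconnected s)
    (hso : IsOpen s) (hv : ∀ t ∈ s, ContDiffAt ℝ 1 v (y t))
    (hy : ∀ t ∈ s, HasDerivAt y (v (y t)) t) (hz : ∀ t ∈ s, HasDerivAt z (v (z t)) t)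
    {t₀ : ℝ} (ht₀ : t₀ ∈ s) (h : y t₀ = z t₀) : EqOn y z s := by
  have hloc : ∀ t ∈ s, y t = z t → y =ᶠ[𝓝 t] z := fun t ht =>
    eventuallyEq_of_hasDerivAt_of_contDiffAt (hv t ht)
      (eventually_of_mem (hso.mem_nhds ht) hy) (eventually_of_mem (hso.mem_nhds ht) hz)
  suffices s ⊆ {t | y =ᶠ[𝓝 t] z} from fun t ht => (this ht).self_of_nhds
  refine hs.subset_of_closure_inter_subset isOpen_setOfPred_eventually_nhds
    ⟨t₀, ht₀, hloc t₀ ht₀ h⟩ ?_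
  rintro t ⟨hcl, ht⟩
  refine hloc t ht (by_contra fun hne => ?_)
  have hne_near : ∀ᶠ τ in 𝓝 t, y τ - z τ ≠ 0 :=
    ((hy t ht).continuousAt.sub (hz t ht).continuousAt).eventually_ne (sub_ne_zero.2 hne)
  obtain ⟨τ, hτ, hτne⟩ := ((mem_closure_iff_frequently.1 hcl).and_eventually hne_near).exists
  exact hτne (sub_eq_zero.2 hτ.self_of_nhds)

end Uniqueness

/-- The ODE as a first-order system for `(r, r')`. -/
noncomputable def odeField (p : ℝ × ℝ) : ℝ × ℝ :=
  (p.2, p.1 + 2 * p.2 ^ 2 / p.1 + p.1 ^ 3 + p.1 * p.2 ^ 2)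

theorem contDiffAt_odeField {p : ℝ × ℝ} (hp : p.1 ≠ 0) : ContDiffAt ℝ 1 odeField p := by
  unfold odeField
  fun_prop (disch := exact hp)

namespace SolOn

variable {r r' r'' s s' s'' : ℝ → ℝ} {a b c d : ℝ}

theorem snd_deriv_eq (h : SolOn r r' r'' a b) {θ : ℝ} (hθ : θ ∈ Ioo a b) :
    r'' θ = (odeField (r θ, r' θ)).2 := by
  obtain ⟨hpos, -, -, heq⟩ := h θ hθ
  simp only [odeField]
  field_simp
  linear_combination heq

theorem hasDerivAt_state (h : SolOn r r' r'' a b) {θ : ℝ} (hθ : θ ∈ Ioo a b) :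
    HasDerivAt (fun t => (r t, r' t)) (odeField (r θ, r' θ)) θ := by
  obtain ⟨-, h1, h2, -⟩ := h θ hθ
  rw [show odeField (r θ, r' θ) = (r' θ, r'' θ) from Prod.ext rfl (h.snd_deriv_eq hθ).symm]
  exact h1.prodMk h2

theorem mono (h : SolOn r r' r'' a b) (hac : a ≤ c) (hdb : d ≤ b) : SolOn r r' r'' c d :=
  fun θ hθ => h θ (Ioo_subset_Ioo hac hdb hθ)

theorem congr (h : SolOn r r' r'' a b) (h0 : EqOn s r (Ioo a b)) (h1 : EqOn s' r' (Ioo a b))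
    (h2 : EqOn s'' r'' (Ioo a b)) : SolOn s s' s'' a b := by
  intro θ hθ
  obtain ⟨hpos, hd, hd', heq⟩ := h θ hθ
  have hnhds : Ioo a b ∈ 𝓝 θ := isOpen_Ioo.mem_nhds hθ
  refine ⟨h0 hθ ▸ hpos, ?_, ?_, by rw [h0 hθ, h1 hθ, h2 hθ]; exact heq⟩
  · rw [h1 hθ]; exact hd.congr_of_eventuallyEq (h0.eventuallyEq_of_mem hnhds)
  · rw [h2 hθ]; exact hd'.congr_of_eventuallyEq (h1.eventuallyEq_of_mem hnhds)

theorem reflect (h : SolOn r r' r'' a b) (c : ℝ) :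
    SolOn (fun θ => r (c - θ)) (fun θ => -r' (c - θ)) (fun θ => r'' (c - θ)) (c - b) (c - a) := by
  intro θ hθ
  obtain ⟨hpos, h1, h2, heq⟩ := h (c - θ) ⟨by linarith [hθ.2], by linarith [hθ.1]⟩
  exact ⟨hpos, h1.comp_const_sub c θ, by simpa using (h2.comp_const_sub c θ).fun_neg,
    by linear_combination heq⟩

theorem eqOn_of_eq (hr : SolOn r r' r'' a b) (hs : SolOn s s' s'' a b) {θ₀ : ℝ}
    (hθ₀ : θ₀ ∈ Ioo a b) (h0 : r θ₀ = s θ₀) (h1 : r' θ₀ = s' θ₀) :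
    EqOn r s (Ioo a b) ∧ EqOn r' s' (Ioo a b) := by
  have hstate : EqOn (fun t => (r t, r' t)) (fun t => (s t, s' t)) (Ioo a b) :=
    isPreconnected_Ioo.eqOn_of_hasDerivAt_of_contDiffAt isOpen_Ioo
      (fun t ht => contDiffAt_odeField (hr t ht).1.ne') (fun t ht => hr.hasDerivAt_state ht)
      (fun t ht => hs.hasDerivAt_state ht) hθ₀ (Prod.ext h0 h1)
  exact ⟨fun t ht => congrArg Prod.fst (hstate ht), fun t ht => congrArg Prod.snd (hstate ht)⟩

theorem eqOn_reflect_of_deriv_eq_zero (h : SolOn r r' r'' a b) {θ₀ : ℝ} (hθ₀ : θ₀ ∈ Ioo a b)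
    (hcrit : r' θ₀ = 0) :
    EqOn r (fun θ => r (2 * θ₀ - θ)) (Ioo a b ∩ Ioo (2 * θ₀ - b) (2 * θ₀ - a)) ∧
      EqOn r' (fun θ => -r' (2 * θ₀ - θ)) (Ioo a b ∩ Ioo (2 * θ₀ - b) (2 * θ₀ - a)) := by
  have hself : 2 * θ₀ - θ₀ = θ₀ := by ring
  rw [Ioo_inter_Ioo]
  refine (h.mono le_sup_left inf_le_left).eqOn_of_eq
    ((h.reflect (2 * θ₀)).mono le_sup_right inf_le_right) ?_ (by rw [hself]) (by simp [hself, hcrit])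
  obtain ⟨ha, hb⟩ := hθ₀
  exact ⟨max_lt ha (by linarith), lt_min hb (by linarith)⟩

theorem piecewise (hr : SolOn r r' r'' a b) (hs : SolOn s s' s'' c d) (had : a < d) (hcb : c < b)
    (h0 : EqOn r s (Ioo a b ∩ Ioo c d)) (h1 : EqOn r' s' (Ioo a b ∩ Ioo c d)) :
    SolOn ((Ioo a b).piecewise r s) ((Ioo a b).piecewise r' s') ((Ioo a b).piecewise r'' s'')
      (min a c) (max b d) := by
  have h2 : EqOn r'' s'' (Ioo a b ∩ Ioo c d) := fun θ hθ => by
    rw [hr.snd_deriv_eq hθ.1, hs.snd_deriv_eq hθ.2, h0 hθ, h1 hθ]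
  have piecewise_eqOn_right {f g : ℝ → ℝ} (hfg : EqOn f g (Ioo a b ∩ Ioo c d)) :
      EqOn ((Ioo a b).piecewise f g) g (Ioo c d) :=
    (Set.eqOn_piecewise _).2 ⟨fun θ hθ => hfg ⟨hθ.2, hθ.1⟩, fun _ _ => rfl⟩
  have hab := hr.congr (piecewise_eqOn _ r s) (piecewise_eqOn _ r' s') (piecewise_eqOn _ r'' s'')
  have hcd := hs.congr (piecewise_eqOn_right h0) (piecewise_eqOn_right h1)
    (piecewise_eqOn_right h2)
  intro θ hθ
  rw [← Ioo_union_Ioo (by simp [had]) (by simp [hcb])] at hθ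
  exact hθ.elim (hab θ) (hcd θ)

end SolOn

theorem stmt10_general (a b : ℝ) (r r' r'' : ℝ → ℝ)
    (hmax : MaximalSolOn r r' r'' a b)
    (θ₀ : ℝ) (hθ₀ : θ₀ ∈ Set.Ioo a b) (hcrit : r' θ₀ = 0) :
    (∀ η : ℝ, θ₀ + η ∈ Set.Ioo a b →
        θ₀ - η ∈ Set.Ioo a b ∧ r (θ₀ + η) = r (θ₀ - η)) ∧
      θ₀ = (a + b) / 2 := by
  obtain ⟨hsol, hext⟩ := hmax
  obtain ⟨ha, hb⟩ := hθ₀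
  obtain ⟨hsym, hsym'⟩ := hsol.eqOn_reflect_of_deriv_eq_zero ⟨ha, hb⟩ hcrit
  have hglued := hsol.piecewise (hsol.reflect (2 * θ₀)) (by linarith) (by linarith) hsym hsym'
  obtain ⟨hmin, hmax⟩ := hext _ _ _ _ _ (min_le_left _ _) (le_max_left _ _)
    (fun θ hθ => piecewise_eq_of_mem _ _ _ hθ) hglued
  have hleft : a ≤ 2 * θ₀ - b := min_eq_left_iff.1 hmin
  have hright : 2 * θ₀ - a ≤ b := max_eq_left_iff.1 hmax
  refine ⟨fun η ⟨hη₁, hη₂⟩ => ⟨⟨by linarith, by linarith⟩, ?_⟩, by linarith⟩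
  have hrefl : r (θ₀ + η) = r (2 * θ₀ - (θ₀ + η)) := hsym ⟨⟨hη₁, hη₂⟩, by linarith, by linarith⟩
  rwa [show 2 * θ₀ - (θ₀ + η) = θ₀ - η by ring] at hrefl

/-- If a maximal positive solution of the ODE on `(a,b)` has a critical point at `θ₀`,
then `r` is symmetric about `θ₀` and consequently `θ₀ = (a+b)/2`. -/
theorem stmt10 (a b : ℝ) (hab : a < b) (r r' r'' : ℝ → ℝ)
    (hmax : MaximalSolOn r r' r'' a b)
    (θ₀ : ℝ) (hθ₀ : θ₀ ∈ Set.Ioo a b) (hcrit : r' θ₀ = 0) :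
    (∀ η : ℝ, θ₀ + η ∈ Set.Ioo a b →
        θ₀ - η ∈ Set.Ioo a b ∧ r (θ₀ + η) = r (θ₀ - η)) ∧
      θ₀ = (a + b) / 2 :=
  stmt10_general a b r r' r'' hmax θ₀ hθ₀ hcrit
end
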